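/- The function φ(v) = -(v² log₂ v² + 2v(1-v) log₂(2v(1-v)) + (1-v)² log₂((1-v)²)) / (2v(1-v)) on (0,1) satisfies φ(v) ≥ 3 for all v ∈ (0,1), with equality iff v = 1/2. -/

import Mathlib

/-!
Writing `h` for the binary entropy in nats, the entropy of `Binomial(2, v)` is
`2 h(v) - 2 v (1 - v) log 2`, so `φ(v) = h(v) / (v (1 - v) log 2) - 1` and the claim becomes
`4 log 2 · v (1 - v) < h(v)` for `v ≠ 1/2`. For `v ≤ 1/8` the crude bounds
`-v log v ≥ 3 v log 2` and `-(1 - v) log (1 - v) ≥ v (1 - v)` suffice, and `h` is symmetric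
about `1/2`. On `[1/8, 7/8]`, put `v = (1 + u)/2`: the bound `log (1 + u) ≤ u - u²/2 + u³/3`,
applied at `±u`, gives `h(v) ≥ log 2 - u²/2 - u⁴/3`, which beats `log 2 · (1 - u²)` as long as
`u² ≤ 9/16 < 3 log 2 - 3/2`.
-/

open Real Set

lemma log_one_add_le_cubic {u : ℝ} (hu : -1 < u) :
    log (1 + u) ≤ u - u ^ 2 / 2 + u ^ 3 / 3 := by
  let f : ℝ → ℝ := fun x => x - x ^ 2 / 2 + x ^ 3 / 3 - log (1 + x)
  have hf : ∀ x, -1 < x → HasDerivAt f (x ^ 3 / (1 + x)) x := by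
    intro x hx
    have hx1 : 1 + x ≠ 0 := by linarith
    refine ((((hasDerivAt_id' x).sub ((hasDerivAt_pow 2 x).div_const 2)).add
      ((hasDerivAt_pow 3 x).div_const 3)).sub
      (((hasDerivAt_id' x).const_add 1).log hx1)).congr_deriv ?_
    field_simp
    ring
  have hcont : ∀ a b, -1 < a → ContinuousOn f (Icc a b) := fun a b ha x hx =>
    (hf x (by linarith [hx.1])).continuousAt.continuousWithinAt
  have hderiv : ∀ a b, -1 < a → ∀ x ∈ interior (Icc a b),
      HasDerivWithinAt f (x ^ 3 / (1 + x)) (interior (Icc a b)) x := fun a b ha x hx => by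
    rw [interior_Icc] at hx
    exact (hf x (by linarith [hx.1])).hasDerivWithinAt
  suffices f 0 ≤ f u by simpa [f] using this
  rcases le_total u 0 with hneg | hpos
  · refine antitoneOn_of_hasDerivWithinAt_nonpos (convex_Icc u 0) (hcont u 0 hu) (hderiv u 0 hu)
      (fun x hx => ?_) ⟨le_rfl, hneg⟩ ⟨hneg, le_rfl⟩ hneg
    rw [interior_Icc] at hx
    exact div_nonpos_of_nonpos_of_nonneg (Odd.pow_nonpos (by decide) hx.2.le) (by linarith [hx.1])
  · refine monotoneOn_of_hasDerivWithinAt_nonneg (convex_Icc 0 u) (hcont 0 u (by norm_num))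
      (hderiv 0 u (by norm_num)) (fun x hx => ?_) ⟨le_rfl, hpos⟩ ⟨hpos, le_rfl⟩ hpos
    rw [interior_Icc] at hx
    have : 0 < x := hx.1
    positivity

lemma four_mul_log_two_mul_lt_binEntropy_of_le {p : ℝ} (hp₀ : 0 < p) (hp : p ≤ 8⁻¹) :
    4 * log 2 * (p * (1 - p)) < binEntropy p := by
  have hp₁ : 0 < 1 - p := by linarith
  have hlog : log p ≤ -(3 * log 2) := by
    calc log p ≤ log 8⁻¹ := log_le_log hp₀ hp
      _ = -(3 * log 2) := by
        rw [log_inv, show (8 : ℝ) = 2 ^ 3 by norm_num, log_pow]; push_cast; ring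
  have hlog₁ : log (1 - p) ≤ -p := by linarith [log_le_sub_one_of_pos hp₁]
  have hlog2 : log 2 < 1 := by linarith [log_two_lt_d9]
  have hlog2₀ : 0 < log 2 := log_pos one_lt_two
  rw [binEntropy, log_inv, log_inv]
  nlinarith [mul_le_mul_of_nonneg_left hlog hp₀.le, mul_le_mul_of_nonneg_left hlog₁ hp₁.le,
    mul_pos (mul_pos hp₀ hp₁) hlog2₀, mul_pos hp₀ hlog2₀]

lemma four_mul_log_two_mul_lt_binEntropy_of_mem_Icc {p : ℝ} (hp : p ∈ Icc (8⁻¹ : ℝ) (7 / 8))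
    (hp₂ : p ≠ 2⁻¹) : 4 * log 2 * (p * (1 - p)) < binEntropy p := by
  obtain ⟨hp₁, hp₇⟩ := hp
  set u := 2 * p - 1 with hu
  have hu₀ : 0 < u ^ 2 := by
    have : u ≠ 0 := by rw [hu]; intro h; apply hp₂; linarith
    positivity
  have hu₉ : u ^ 2 ≤ 9 / 16 := by nlinarith
  have hlog : log p ≤ u - u ^ 2 / 2 + u ^ 3 / 3 - log 2 := by
    rw [show p = (1 + u) / 2 by rw [hu]; ring, log_div (by linarith) two_ne_zero]
    linarith [log_one_add_le_cubic (u := u) (by linarith)]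
  have hlog₁ : log (1 - p) ≤ -u - u ^ 2 / 2 - u ^ 3 / 3 - log 2 := by
    rw [show 1 - p = (1 + -u) / 2 by rw [hu]; ring, log_div (by linarith) two_ne_zero]
    linarith [log_one_add_le_cubic (u := -u) (by linarith)]
  have hlog2 : 0.6931471803 < log 2 := log_two_gt_d9
  rw [binEntropy, log_inv, log_inv]
  nlinarith [mul_le_mul_of_nonneg_left hlog (by linarith : (0 : ℝ) ≤ p),
    mul_le_mul_of_nonneg_left hlog₁ (by linarith : (0 : ℝ) ≤ 1 - p),
    mul_le_mul_of_nonneg_left hu₉ hu₀.le]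

theorem four_mul_log_two_mul_lt_binEntropy {p : ℝ} (hp₀ : 0 < p) (hp₁ : p < 1) (hp : p ≠ 2⁻¹) :
    4 * log 2 * (p * (1 - p)) < binEntropy p := by
  rcases le_or_gt p 8⁻¹ with hp₈ | hp₈
  · exact four_mul_log_two_mul_lt_binEntropy_of_le hp₀ hp₈
  rcases le_or_gt p (7 / 8) with hp₇ | hp₇
  · exact four_mul_log_two_mul_lt_binEntropy_of_mem_Icc ⟨hp₈.le, hp₇⟩ hp
  · have := four_mul_log_two_mul_lt_binEntropy_of_le (p := 1 - p) (by linarith) (by linarith)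
    rwa [binEntropy_one_sub, sub_sub_cancel, mul_comm (1 - p)] at this

lemma entropy_binomial_two_div_eq {v : ℝ} (hv₀ : 0 < v) (hv₁ : v < 1) :
    -(v ^ 2 * logb 2 (v ^ 2) + 2 * v * (1 - v) * logb 2 (2 * v * (1 - v)) +
        (1 - v) ^ 2 * logb 2 ((1 - v) ^ 2)) / (2 * v * (1 - v)) =
      binEntropy v / (log 2 * (v * (1 - v))) - 1 := by
  have hv₁' : 0 < 1 - v := sub_pos.2 hv₁
  rw [logb, logb, logb, log_pow, log_pow, log_mul (by positivity) hv₁'.ne',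
    log_mul two_ne_zero hv₀.ne', binEntropy, log_inv, log_inv]
  field_simp
  ring

theorem stmt14 :
    ∀ v ∈ Set.Ioo (0 : ℝ) 1,
      3 ≤ -(v ^ 2 * Real.logb 2 (v ^ 2) + 2 * v * (1 - v) * Real.logb 2 (2 * v * (1 - v)) +
            (1 - v) ^ 2 * Real.logb 2 ((1 - v) ^ 2)) / (2 * v * (1 - v)) ∧
      (-(v ^ 2 * Real.logb 2 (v ^ 2) + 2 * v * (1 - v) * Real.logb 2 (2 * v * (1 - v)) +
            (1 - v) ^ 2 * Real.logb 2 ((1 - v) ^ 2)) / (2 * v * (1 - v)) = 3 ↔ v = 1 / 2) := by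
  rintro v ⟨hv₀, hv₁⟩
  rw [entropy_binomial_two_div_eq hv₀ hv₁, one_div]
  rcases eq_or_ne v 2⁻¹ with rfl | hv
  · have hlog2 : log 2 ≠ 0 := (log_pos one_lt_two).ne'
    have hφ : log 2 / (log 2 * (2⁻¹ * (1 - 2⁻¹))) - 1 = 3 := by
      field_simp
      norm_num
    rw [binEntropy_two_inv, hφ]
    norm_num
  · have hD : 0 < log 2 * (v * (1 - v)) := by
      have := sub_pos.2 hv₁
      positivity
    have h3 : 3 < binEntropy v / (log 2 * (v * (1 - v))) - 1 := by
      rw [lt_sub_iff_add_lt, lt_div_iff₀ hD]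
      linarith [four_mul_log_two_mul_lt_binEntropy hv₀ hv₁ hv]
    exact ⟨h3.le, iff_of_false h3.ne' hv⟩
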